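/- arXiv:1904.04151 — 5 statements merged into one kernel-verified Lean document; each statement's English description precedes it below -/
import Mathlib

section
/- Let g : [0,s] → ℝ be a nondecreasing function. Then the Lebesgue measure of the closure of the image g([0,s]) equals g(s) - g(0) minus the sum of the jump sizes of g, i.e. |closure(g([0,s]))| = g(s) - g(0) - Σ_{r ∈ [0,s]} (g(r+) - g(r-)) (with the one-sided conventions g(0-) = g(0), g(s+) = g(s)). -/
/-!
For `g` monotone on `[a, b]`, each point `r` with a jump leaves the open gap
`(g(r-), g(r+))`, and these gaps are pairwise disjoint, hence countably many, of total length
the sum of the jumps. The closure of `g([a, b])` meets the union of the gaps only in the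
countably many values `g r`, and contains every other point of `[g a, g b]`: such a point `y`
lies in `[g(r-), g(r+)]` for `r = sup {u | g u ≤ y}`, so it is either an endpoint of that
interval (a limit of values of `g`) or inside a gap. Up to a null set the closure is therefore
`[g a, g b]` minus the gaps.
-/

open MeasureTheory

/-- The jump of a monotone function `g` on `[0,s]` at the point `r`, with the
one-sided conventions `g(0-) = g 0` and `g(s+) = g s`: the right limit is
`inf_{r < u ≤ s} g u` (for `r < s`) and the left limit is
`sup_{0 ≤ u < r} g u` (for `0 < r`). -/
noncomputable def monotoneJump (g : ℝ → ℝ) (s r : ℝ) : ℝ :=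
  (if r < s then sInf (g '' Set.Ioc r s) else g s)
    - (if 0 < r then sSup (g '' Set.Ico 0 r) else g 0)

open Set

noncomputable def leftLimOn (g : ℝ → ℝ) (a r : ℝ) : ℝ :=
  if a < r then sSup (g '' Ico a r) else g a

noncomputable def rightLimOn (g : ℝ → ℝ) (b r : ℝ) : ℝ :=
  if r < b then sInf (g '' Ioc r b) else g b

theorem monotoneJump_eq (g : ℝ → ℝ) (s r : ℝ) :
    monotoneJump g s r = rightLimOn g s r - leftLimOn g 0 r := rfl

def jumpPoints (g : ℝ → ℝ) (a b : ℝ) : Set ℝ :=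
  {r ∈ Icc a b | leftLimOn g a r < rightLimOn g b r}

def jumpGaps (g : ℝ → ℝ) (a b : ℝ) : Set ℝ :=
  ⋃ r ∈ jumpPoints g a b, Ioo (leftLimOn g a r) (rightLimOn g b r)

section

variable {g : ℝ → ℝ} {a b r r' u y : ℝ}

theorem leftLimOn_le (ha : g a ≤ y) (h : ∀ u ∈ Ico a r, g u ≤ y) : leftLimOn g a r ≤ y := by
  unfold leftLimOn
  split_ifs with har
  · exact csSup_le ⟨g a, a, ⟨le_rfl, har⟩, rfl⟩ (forall_mem_image.2 h)
  · exact ha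

theorem le_rightLimOn (hb : y ≤ g b) (h : ∀ u ∈ Ioc r b, y ≤ g u) : y ≤ rightLimOn g b r := by
  unfold rightLimOn
  split_ifs with hrb
  · exact le_csInf ⟨g b, b, ⟨hrb, le_rfl⟩, rfl⟩ (forall_mem_image.2 h)
  · exact hb

theorem jumpPoints_subset_Icc : jumpPoints g a b ⊆ Icc a b :=
  sep_subset _ _

theorem isOpen_jumpGaps : IsOpen (jumpGaps g a b) :=
  isOpen_biUnion fun _ _ => isOpen_Ioo

namespace MonotoneOn

theorem bddAbove_image_Ico (hg : MonotoneOn g (Icc a b)) (hrb : r ≤ b) :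
    BddAbove (g '' Ico a r) :=
  ⟨g b, forall_mem_image.2 fun _ hu =>
    hg ⟨hu.1, hu.2.le.trans hrb⟩ ⟨hu.1.trans (hu.2.le.trans hrb), le_rfl⟩ (hu.2.le.trans hrb)⟩

theorem bddBelow_image_Ioc (hg : MonotoneOn g (Icc a b)) (har : a ≤ r) :
    BddBelow (g '' Ioc r b) :=
  ⟨g a, forall_mem_image.2 fun _ hu =>
    hg ⟨le_rfl, (har.trans hu.1.le).trans hu.2⟩ ⟨har.trans hu.1.le, hu.2⟩ (har.trans hu.1.le)⟩

theorem le_leftLimOn (hg : MonotoneOn g (Icc a b)) (hu : u ∈ Ico a r) (hrb : r ≤ b) :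
    g u ≤ leftLimOn g a r := by
  rw [leftLimOn, if_pos (hu.1.trans_lt hu.2)]
  exact le_csSup (hg.bddAbove_image_Ico hrb) (mem_image_of_mem g hu)

theorem rightLimOn_le (hg : MonotoneOn g (Icc a b)) (hu : u ∈ Ioc r b) (har : a ≤ r) :
    rightLimOn g b r ≤ g u := by
  rw [rightLimOn, if_pos (hu.1.trans_le hu.2)]
  exact csInf_le (hg.bddBelow_image_Ioc har) (mem_image_of_mem g hu)

theorem apply_left_le_leftLimOn (hg : MonotoneOn g (Icc a b)) (hr : r ∈ Icc a b) :
    g a ≤ leftLimOn g a r := by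
  by_cases har : a < r
  · exact hg.le_leftLimOn ⟨le_rfl, har⟩ hr.2
  · rw [leftLimOn, if_neg har]

theorem rightLimOn_le_apply_right (hg : MonotoneOn g (Icc a b)) (hr : r ∈ Icc a b) :
    rightLimOn g b r ≤ g b := by
  by_cases hrb : r < b
  · exact hg.rightLimOn_le ⟨hrb, le_rfl⟩ hr.1
  · rw [rightLimOn, if_neg hrb]

theorem leftLimOn_le_rightLimOn (hg : MonotoneOn g (Icc a b)) (hr : r ∈ Icc a b) :
    leftLimOn g a r ≤ rightLimOn g b r := by
  have ha : a ∈ Icc a b := ⟨le_rfl, hr.1.trans hr.2⟩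
  have hb : b ∈ Icc a b := ⟨hr.1.trans hr.2, le_rfl⟩
  calc leftLimOn g a r ≤ g r :=
        leftLimOn_le (hg ha hr hr.1) fun u hu => hg ⟨hu.1, hu.2.le.trans hr.2⟩ hr hu.2.le
    _ ≤ rightLimOn g b r :=
        le_rightLimOn (hg hr hb hr.2) fun u hu => hg hr ⟨hr.1.trans hu.1.le, hu.2⟩ hu.1.le

theorem rightLimOn_le_leftLimOn (hg : MonotoneOn g (Icc a b)) (har : a ≤ r) (hr'b : r' ≤ b)
    (h : r < r') : rightLimOn g b r ≤ leftLimOn g a r' := by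
  obtain ⟨m, hrm, hmr'⟩ := exists_between h
  calc rightLimOn g b r ≤ g m := hg.rightLimOn_le ⟨hrm, hmr'.le.trans hr'b⟩ har
    _ ≤ leftLimOn g a r' := hg.le_leftLimOn ⟨har.trans hrm.le, hmr'⟩ hr'b

theorem leftLimOn_mem_closure (hg : MonotoneOn g (Icc a b)) (hr : r ∈ Icc a b) :
    leftLimOn g a r ∈ closure (g '' Icc a b) := by
  unfold leftLimOn
  split_ifs with har
  · exact closure_mono (image_mono (Ico_subset_Icc_self.trans (Icc_subset_Icc_right hr.2)))
      (csSup_mem_closure ⟨g a, a, ⟨le_rfl, har⟩, rfl⟩ (hg.bddAbove_image_Ico hr.2))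
  · exact subset_closure (mem_image_of_mem g ⟨le_rfl, hr.1.trans hr.2⟩)

theorem rightLimOn_mem_closure (hg : MonotoneOn g (Icc a b)) (hr : r ∈ Icc a b) :
    rightLimOn g b r ∈ closure (g '' Icc a b) := by
  unfold rightLimOn
  split_ifs with hrb
  · exact closure_mono (image_mono (Ioc_subset_Icc_self.trans (Icc_subset_Icc_left hr.1)))
      (csInf_mem_closure ⟨g b, b, ⟨hrb, le_rfl⟩, rfl⟩ (hg.bddBelow_image_Ioc hr.1))
  · exact subset_closure (mem_image_of_mem g ⟨hr.1.trans hr.2, le_rfl⟩)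

theorem closure_image_subset_Icc (hg : MonotoneOn g (Icc a b)) :
    closure (g '' Icc a b) ⊆ Icc (g a) (g b) :=
  closure_minimal (image_subset_iff.2 fun _ hu =>
    ⟨hg ⟨le_rfl, hu.1.trans hu.2⟩ hu hu.1, hg hu ⟨hu.1.trans hu.2, le_rfl⟩ hu.2⟩) isClosed_Icc

theorem exists_leftLimOn_le_le_rightLimOn (hg : MonotoneOn g (Icc a b)) (hab : a ≤ b)
    (hy : y ∈ Icc (g a) (g b)) :
    ∃ r ∈ Icc a b, leftLimOn g a r ≤ y ∧ y ≤ rightLimOn g b r := by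
  set A := {u ∈ Icc a b | g u ≤ y}
  have haA : a ∈ A := ⟨left_mem_Icc.2 hab, hy.1⟩
  have hA : BddAbove A := ⟨b, fun u hu => hu.1.2⟩
  have hrI : sSup A ∈ Icc a b := ⟨le_csSup hA haA, csSup_le ⟨a, haA⟩ fun u hu => hu.1.2⟩
  refine ⟨sSup A, hrI, leftLimOn_le hy.1 fun u hu => ?_, le_rightLimOn hy.2 fun u hu => ?_⟩
  · obtain ⟨v, hvA, huv⟩ := exists_lt_of_lt_csSup ⟨a, haA⟩ hu.2
    exact (hg ⟨hu.1, hu.2.le.trans hrI.2⟩ hvA.1 huv.le).trans hvA.2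
  · by_contra! hgu
    exact hu.1.not_ge (le_csSup hA ⟨⟨hrI.1.trans hu.1.le, hu.2⟩, hgu.le⟩)

theorem image_inter_Ioo_subset (hg : MonotoneOn g (Icc a b)) (hr : r ∈ Icc a b) :
    g '' Icc a b ∩ Ioo (leftLimOn g a r) (rightLimOn g b r) ⊆ {g r} := by
  rintro _ ⟨⟨u, hu, rfl⟩, hL, hR⟩
  rcases lt_trichotomy u r with hur | rfl | hru
  · exact absurd (hg.le_leftLimOn ⟨hu.1, hur⟩ hr.2) hL.not_ge
  · rfl
  · exact absurd (hg.rightLimOn_le ⟨hru, hu.2⟩ hr.1) hR.not_ge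

theorem pairwiseDisjoint_Ioo_leftLimOn_rightLimOn (hg : MonotoneOn g (Icc a b)) :
    (Icc a b).PairwiseDisjoint fun r => Ioo (leftLimOn g a r) (rightLimOn g b r) := by
  intro r hr r' hr' hne
  wlog h : r < r' generalizing r r'
  · exact (this hr' hr hne.symm (hne.lt_or_gt.resolve_left h)).symm
  exact Ioo_disjoint_Ioo.2 <| (min_le_left _ _).trans <|
    (hg.rightLimOn_le_leftLimOn hr.1 hr'.2 h).trans (le_max_right _ _)

theorem countable_jumpPoints (hg : MonotoneOn g (Icc a b)) : (jumpPoints g a b).Countable :=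
  (hg.pairwiseDisjoint_Ioo_leftLimOn_rightLimOn.subset jumpPoints_subset_Icc).countable_of_isOpen
    (fun _ _ => isOpen_Ioo) fun _ hr => nonempty_Ioo.2 hr.2

theorem jumpGaps_subset_Icc (hg : MonotoneOn g (Icc a b)) : jumpGaps g a b ⊆ Icc (g a) (g b) :=
  iUnion₂_subset fun _ hr => Ioo_subset_Icc_self.trans <|
    Icc_subset_Icc (hg.apply_left_le_leftLimOn hr.1) (hg.rightLimOn_le_apply_right hr.1)

theorem volume_jumpGaps_le (hg : MonotoneOn g (Icc a b)) :
    volume (jumpGaps g a b) ≤ ENNReal.ofReal (g b - g a) :=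
  (measure_mono hg.jumpGaps_subset_Icc).trans_eq Real.volume_Icc

theorem volume_jumpGaps (hg : MonotoneOn g (Icc a b)) :
    volume (jumpGaps g a b) =
      ∑' r : Icc a b, ENNReal.ofReal (rightLimOn g b r - leftLimOn g a r) := by
  rw [jumpGaps, measure_biUnion hg.countable_jumpPoints
    (hg.pairwiseDisjoint_Ioo_leftLimOn_rightLimOn.subset jumpPoints_subset_Icc)
    fun _ _ => measurableSet_Ioo]
  simp only [Real.volume_Ioo]
  set F := fun r => ENNReal.ofReal (rightLimOn g b r - leftLimOn g a r)
  have hsupp : jumpPoints g a b = Icc a b ∩ Function.support F := by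
    ext r
    simp [jumpPoints, F]
  rw [tsum_subtype (jumpPoints g a b) F, tsum_subtype (Icc a b) F, hsupp, indicator_inter_support]

theorem Icc_diff_jumpGaps_subset_closure (hg : MonotoneOn g (Icc a b)) (hab : a ≤ b) :
    Icc (g a) (g b) \ jumpGaps g a b ⊆ closure (g '' Icc a b) := by
  rintro y ⟨hy, hyU⟩
  obtain ⟨r, hr, hLy, hyR⟩ := hg.exists_leftLimOn_le_le_rightLimOn hab hy
  rcases hLy.eq_or_lt with hLy | hLy
  · exact hLy ▸ hg.leftLimOn_mem_closure hr
  rcases hyR.eq_or_lt with hyR | hyR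
  · exact hyR ▸ hg.rightLimOn_mem_closure hr
  exact absurd (show y ∈ jumpGaps g a b from mem_biUnion ⟨hr, hLy.trans hyR⟩ ⟨hLy, hyR⟩) hyU

theorem closure_image_inter_jumpGaps_subset (hg : MonotoneOn g (Icc a b)) :
    closure (g '' Icc a b) ∩ jumpGaps g a b ⊆ g '' jumpPoints g a b := by
  rintro y ⟨hy, hyU⟩
  obtain ⟨r, hr, hyr⟩ := mem_iUnion₂.1 hyU
  have hyr : y ∈ closure {g r} :=
    closure_mono (hg.image_inter_Ioo_subset hr.1) (isOpen_Ioo.closure_inter ⟨hy, hyr⟩)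
  rw [closure_singleton] at hyr
  exact ⟨r, hr, hyr.symm⟩

theorem volume_closure_image (hg : MonotoneOn g (Icc a b)) (hab : a ≤ b) :
    volume (closure (g '' Icc a b)) = ENNReal.ofReal (g b - g a) - volume (jumpGaps g a b) := by
  have hnull : volume (closure (g '' Icc a b) ∩ jumpGaps g a b) = 0 :=
    ((hg.countable_jumpPoints.image g).mono hg.closure_image_inter_jumpGaps_subset).measure_zero _
  have hdiff : closure (g '' Icc a b) \ jumpGaps g a b = Icc (g a) (g b) \ jumpGaps g a b :=
    (sdiff_subset_sdiff_left hg.closure_image_subset_Icc).antisymm fun y hy =>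
      ⟨hg.Icc_diff_jumpGaps_subset_closure hab hy, hy.2⟩
  rw [← measure_sdiff_null' hnull, hdiff, measure_sdiff hg.jumpGaps_subset_Icc
    isOpen_jumpGaps.nullMeasurableSet (hg.volume_jumpGaps_le.trans_lt ENNReal.ofReal_lt_top).ne,
    Real.volume_Icc]

end MonotoneOn

end

theorem measure_closure_image_monotone
    (s : ℝ) (hs : 0 < s) (g : ℝ → ℝ) (hg : MonotoneOn g (Set.Icc 0 s)) :
    (volume (closure (g '' Set.Icc 0 s))).toReal
      = g s - g 0 - ∑' r : Set.Icc (0 : ℝ) s, monotoneJump g s r := by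
  have hjump : ∀ r : Icc 0 s, (ENNReal.ofReal (monotoneJump g s r)).toReal = monotoneJump g s r :=
    fun r => ENNReal.toReal_ofReal (sub_nonneg.2 (hg.leftLimOn_le_rightLimOn r.2))
  rw [hg.volume_closure_image hs.le, ENNReal.toReal_sub_of_le hg.volume_jumpGaps_le
    ENNReal.ofReal_ne_top, hg.volume_jumpGaps, ENNReal.toReal_ofReal
    (sub_nonneg.2 (hg (left_mem_Icc.2 hs.le) (right_mem_Icc.2 hs.le) hs.le)),
    ENNReal.tsum_toReal_eq fun _ => ENNReal.ofReal_ne_top]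
  simp only [← monotoneJump_eq, hjump]
end

section
/- Let T > 0, let g : [0,T] → ℝ be continuous, and let (g_k)_{k≥1} be functions [0,T] → ℝ such that g_k(t) → g(t) for every t ∈ [0,T], and such that sup_{k≥1} sup_{0≤t≤t+h≤T} (g_k(t+h) - g_k(t))⁻ → 0 as h → 0 (where x⁻ denotes the negative part). Then g_k → g uniformly on [0,T]. -/
theorem dini_type_uniform_convergence
    (T : ℝ) (hT : 0 < T) (g : ℝ → ℝ) (hg : ContinuousOn g (Set.Icc 0 T))
    (gk : ℕ → ℝ → ℝ)
    (hpt : ∀ t ∈ Set.Icc (0 : ℝ) T,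
      Filter.Tendsto (fun k => gk k t) Filter.atTop (nhds (g t)))
    (hneg : ∀ ε : ℝ, 0 < ε → ∃ δ : ℝ, 0 < δ ∧ ∀ h : ℝ, 0 < h → h < δ →
      ∀ k : ℕ, ∀ t t' : ℝ, t ∈ Set.Icc (0 : ℝ) T → t' ∈ Set.Icc (0 : ℝ) T →
        t ≤ t' → t' - t ≤ h → -ε ≤ gk k t' - gk k t) :
    TendstoUniformlyOn gk g Filter.atTop (Set.Icc 0 T) := by
  rw [Metric.tendstoUniformlyOn_iff]
  intro ε hε
  obtain ⟨δ, hδ, hδ'⟩ := hneg (ε/4) (by linarith)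
  have hgu : UniformContinuousOn g (Set.Icc 0 T) :=
    isCompact_Icc.uniformContinuousOn_of_continuous hg
  rw [Metric.uniformContinuousOn_iff] at hgu
  obtain ⟨η, hη, hη'⟩ := hgu (ε/4) (by linarith)
  set m := min (δ/2) (η/2) with hm
  have hm0 : 0 < m := lt_min (by linarith) (by linarith)
  obtain ⟨n, hn⟩ := exists_nat_gt (T / m)
  have hn0 : 0 < n := by
    have : (0:ℝ) < T / m := by positivity
    exact_mod_cast this.trans hn
  have hnR : (0:ℝ) < (n:ℝ) := by exact_mod_cast hn0
  set τ : ℕ → ℝ := fun i => i * T / n with hτ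
  have hTnm : T / n < m := by
    rw [div_lt_iff₀ hnR]
    have := (div_lt_iff₀ hm0).mp hn
    linarith [this]
  have hτmem : ∀ i ≤ n, τ i ∈ Set.Icc (0:ℝ) T := by
    intro i hi
    constructor
    · positivity
    · rw [hτ]
      rw [div_le_iff₀ hnR]
      have : (i:ℝ) ≤ n := by exact_mod_cast hi
      nlinarith
  have hfin : ∀ᶠ k in Filter.atTop, ∀ i ∈ Finset.range (n+1),
      |gk k (τ i) - g (τ i)| < ε/4 := by
    rw [Filter.eventually_all_finset]
    intro i hi
    have hi' : i ≤ n := by simpa using Nat.lt_succ_iff.mp (Finset.mem_range.mp hi)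
    obtain ⟨N, hN⟩ := Metric.tendsto_atTop.mp (hpt (τ i) (hτmem i hi')) (ε/4) (by linarith)
    filter_upwards [Filter.eventually_ge_atTop N] with k hk
    have := hN k hk
    rwa [Real.dist_eq] at this
  filter_upwards [hfin] with k hk t ht
  obtain ⟨ht0, htT⟩ := ht
  -- choose index i
  set i : ℕ := min (Nat.floor (t * n / T)) (n - 1) with hi
  have hin : i ≤ n - 1 := min_le_right _ _
  have hi1n : i + 1 ≤ n := by omega
  have hτi_le : τ i ≤ t := by
    have h1 : (i:ℝ) ≤ t * n / T := by
      calc (i:ℝ) ≤ (Nat.floor (t * n / T) : ℝ) := by exact_mod_cast min_le_left _ _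
        _ ≤ t * n / T := Nat.floor_le (by positivity)
    rw [hτ, div_le_iff₀ hnR]
    have := (le_div_iff₀ hT).mp h1
    linarith
  have hle_τi1 : t ≤ τ (i+1) := by
    by_cases hc : Nat.floor (t * n / T) ≤ n - 1
    · have hieq : i = Nat.floor (t * n / T) := min_eq_left hc
      have h2 : t * n / T < (i:ℝ) + 1 := by
        rw [hieq]
        exact Nat.lt_floor_add_one _
      have := (div_lt_iff₀ hT).mp h2
      rw [hτ]
      rw [le_div_iff₀ hnR]
      push_cast
      nlinarith
    · have hieq : i = n - 1 := min_eq_right (le_of_not_ge hc)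
      have : i + 1 = n := by omega
      rw [hτ, this]
      rw [le_div_iff₀ hnR]
      nlinarith
  have hmesh : τ (i+1) - τ i = T / n := by
    rw [hτ]
    push_cast
    field_simp
    ring
  have hτi_mem : τ i ∈ Set.Icc (0:ℝ) T := hτmem i (by omega)
  have hτi1_mem : τ (i+1) ∈ Set.Icc (0:ℝ) T := hτmem (i+1) hi1n
  have hmδ : m ≤ δ/2 := min_le_left _ _
  have hmη : m ≤ η/2 := min_le_right _ _
  -- negative increment bounds
  have hlow : -(ε/4) ≤ gk k t - gk k (τ i) := by
    refine hδ' (δ/2) (by linarith) (by linarith) k (τ i) t hτi_mem ⟨ht0, htT⟩ hτi_le ?_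
    have : t - τ i ≤ τ (i+1) - τ i := by linarith
    rw [hmesh] at this
    linarith
  have hhigh : -(ε/4) ≤ gk k (τ (i+1)) - gk k t := by
    refine hδ' (δ/2) (by linarith) (by linarith) k t (τ (i+1)) ⟨ht0, htT⟩ hτi1_mem hle_τi1 ?_
    have : τ (i+1) - t ≤ τ (i+1) - τ i := by linarith
    rw [hmesh] at this
    linarith
  -- g values close at mesh points
  have hgi : |g (τ i) - g t| < ε/4 := by
    have := hη' (τ i) hτi_mem t ⟨ht0, htT⟩ ?_
    · rwa [Real.dist_eq] at this
    · rw [Real.dist_eq, abs_of_nonpos (by linarith)]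
      have : t - τ i ≤ T / n := by rw [← hmesh]; linarith
      linarith
  have hgi1 : |g (τ (i+1)) - g t| < ε/4 := by
    have := hη' (τ (i+1)) hτi1_mem t ⟨ht0, htT⟩ ?_
    · rwa [Real.dist_eq] at this
    · rw [Real.dist_eq, abs_of_nonneg (by linarith)]
      have : τ (i+1) - t ≤ T / n := by rw [← hmesh]; linarith
      linarith
  have hki : |gk k (τ i) - g (τ i)| < ε/4 := hk i (Finset.mem_range.mpr (by omega))
  have hki1 : |gk k (τ (i+1)) - g (τ (i+1))| < ε/4 := hk (i+1) (Finset.mem_range.mpr (by omega))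
  rw [Real.dist_eq]
  rw [abs_lt] at *
  constructor <;> [skip; skip] <;>
    cases' hki with a b <;> cases' hki1 with c d <;> cases' hgi with e f <;>
      cases' hgi1 with p q <;> linarith
end

section
/- Let X : [0,∞) → ℝ be a càdlàg function with only nonnegative jumps (X_u - X_{u-} ≥ 0 for all u) and X_0 = 0, and fix s̄ > 0. Define Φ_X(h) = sup{ (X_u - X_r)⁻ : 0 ≤ r ≤ s̄, 0 ≤ u - r ≤ h } for h ∈ [0,1]. Then Φ_X is continuous on [0,1] and Φ_X(0) = 0. -/
/-- The downward modulus of a path `X` on `[0, s̄]` over time lag `h`: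
`Φ_X(h) = sup { (X_u - X_r)⁻ : 0 ≤ r ≤ s̄, 0 ≤ u - r ≤ h }`. -/
noncomputable def downwardModulus (X : ℝ → ℝ) (sbar h : ℝ) : ℝ :=
  sSup ((fun p : ℝ × ℝ => max (-(X p.2 - X p.1)) 0)
    '' {p : ℝ × ℝ | 0 ≤ p.1 ∧ p.1 ≤ sbar ∧ p.1 ≤ p.2 ∧ p.2 - p.1 ≤ h})

open Filter Set Topology

lemma limit_compare {G : Filter ℕ} [G.NeBot] {f g : ℕ → ℝ} {a b ε : ℝ}
    (hf : Tendsto f G (nhds a)) (hg : Tendsto g G (nhds b))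
    (h : ∀ n, ε ≤ f n - g n) : ε ≤ a - b :=
  ge_of_tendsto' (hf.sub hg) fun n => h n

lemma key_lemma (X : ℝ → ℝ)
    (hrc : ∀ u : ℝ, ContinuousWithinAt X (Set.Ici u) u)
    (hll : ∀ u : ℝ, 0 < u → ∃ l : ℝ,
      Filter.Tendsto X (nhdsWithin u (Set.Iio u)) (nhds l) ∧ l ≤ X u)
    (T ε : ℝ) (hε : 0 < ε) :
    ∃ δ > (0:ℝ), ∀ r u : ℝ, 0 ≤ r → r ≤ T → r ≤ u → u ≤ r + δ → X r - X u < ε := by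
  by_contra hcon
  push_neg at hcon
  -- choose sequences
  have hseq : ∀ n : ℕ, ∃ r u : ℝ, 0 ≤ r ∧ r ≤ T ∧ r ≤ u ∧ u ≤ r + 1/(n+1) ∧ ε ≤ X r - X u := by
    intro n
    obtain ⟨r, u, h1, h2, h3, h4, h5⟩ := hcon (1/(n+1)) (by positivity)
    exact ⟨r, u, h1, h2, h3, h4, h5⟩
  choose r u hr0 hrT hru hur hX using hseq
  have hT0 : (0:ℝ) ≤ T := le_trans (hr0 0) (hrT 0)
  obtain ⟨t, ht, φ, hφ, hRt⟩ := (isCompact_Icc (a := (0:ℝ)) (b := T)).tendsto_subseq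
    (x := r) (fun n => ⟨hr0 n, hrT n⟩)
  set R := r ∘ φ with hR
  set U := u ∘ φ with hU
  have hRU : ∀ n, R n ≤ U n := fun n => hru (φ n)
  have hR0 : ∀ n, 0 ≤ R n := fun n => hr0 (φ n)
  have hUt : Tendsto U atTop (nhds t) := by
    have h0 : Tendsto (fun n : ℕ => R n + 1/(φ n + 1)) atTop (nhds t) := by
      have : Tendsto (fun n : ℕ => 1/((φ n : ℝ) + 1)) atTop (nhds 0) := by
        apply Tendsto.comp (f := fun n : ℕ => φ n) (g := fun m : ℕ => 1/((m:ℝ)+1))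
        · exact tendsto_one_div_add_atTop_nhds_zero_nat
        · exact hφ.tendsto_atTop
      simpa using hRt.add this
    exact tendsto_of_tendsto_of_tendsto_of_le_of_le hRt h0 hRU (fun n => hur (φ n))
  have hXcomp : ∀ n, ε ≤ X (R n) - X (U n) := fun n => hX (φ n)
  -- split into three cases
  have htri : ∀ n : ℕ, t ≤ R n ∨ (R n < t ∧ t ≤ U n) ∨ U n < t := by
    intro n
    rcases le_or_gt t (R n) with h | h
    · exact Or.inl h
    rcases le_or_gt t (U n) with h' | h'
    · exact Or.inr (Or.inl ⟨h, h'⟩)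
    · exact Or.inr (Or.inr h')
  have hfreq : (∃ᶠ n in atTop, t ≤ R n) ∨ (∃ᶠ n in atTop, R n < t ∧ t ≤ U n) ∨
      (∃ᶠ n in atTop, U n < t) := by
    have : ∃ᶠ n in atTop, (t ≤ R n ∨ (R n < t ∧ t ≤ U n) ∨ U n < t) :=
      Filter.Frequently.of_forall htri
    rcases frequently_or_distrib.mp this with h | h
    · exact Or.inl h
    rcases frequently_or_distrib.mp h with h | h
    · exact Or.inr (Or.inl h)
    · exact Or.inr (Or.inr h)
  rcases hfreq with h | h | h
  · -- case 1 : both eventually in Ici t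
    set G := atTop ⊓ 𝓟 {n | t ≤ R n} with hG
    haveI : G.NeBot := Filter.frequently_iff_neBot.mp h
    have hmem : ∀ᶠ n in G, t ≤ R n := eventually_inf_principal.2 (Eventually.of_forall fun n h => h)
    have hRG : Tendsto R G (nhdsWithin t (Ici t)) :=
      tendsto_nhdsWithin_iff.2 ⟨hRt.mono_left inf_le_left, hmem⟩
    have hUG : Tendsto U G (nhdsWithin t (Ici t)) :=
      tendsto_nhdsWithin_iff.2 ⟨hUt.mono_left inf_le_left,
        hmem.mono fun n hn => le_trans hn (hRU n)⟩
    have h1 : Tendsto (fun n => X (R n)) G (nhds (X t)) := (hrc t).tendsto.comp hRG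
    have h2 : Tendsto (fun n => X (U n)) G (nhds (X t)) := (hrc t).tendsto.comp hUG
    have := limit_compare h1 h2 hXcomp
    linarith
  · -- case 2 : R in Iio t, U in Ici t
    set G := atTop ⊓ 𝓟 {n | R n < t ∧ t ≤ U n} with hG
    haveI hGn : G.NeBot := Filter.frequently_iff_neBot.mp h
    have hmem : ∀ᶠ n in G, R n < t ∧ t ≤ U n :=
      eventually_inf_principal.2 (Eventually.of_forall fun n h => h)
    obtain ⟨n0, hn0⟩ := h.exists
    have ht0 : 0 < t := lt_of_le_of_lt (hR0 n0) hn0.1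
    obtain ⟨l, hl, hlX⟩ := hll t ht0
    have hRG : Tendsto R G (nhdsWithin t (Iio t)) :=
      tendsto_nhdsWithin_iff.2 ⟨hRt.mono_left inf_le_left, hmem.mono fun n hn => hn.1⟩
    have hUG : Tendsto U G (nhdsWithin t (Ici t)) :=
      tendsto_nhdsWithin_iff.2 ⟨hUt.mono_left inf_le_left, hmem.mono fun n hn => hn.2⟩
    have h1 : Tendsto (fun n => X (R n)) G (nhds l) := hl.comp hRG
    have h2 : Tendsto (fun n => X (U n)) G (nhds (X t)) := (hrc t).tendsto.comp hUG
    have := limit_compare h1 h2 hXcomp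
    linarith
  · -- case 3 : both in Iio t
    set G := atTop ⊓ 𝓟 {n | U n < t} with hG
    haveI : G.NeBot := Filter.frequently_iff_neBot.mp h
    have hmem : ∀ᶠ n in G, U n < t :=
      eventually_inf_principal.2 (Eventually.of_forall fun n h => h)
    obtain ⟨n0, hn0⟩ := h.exists
    have ht0 : 0 < t := lt_of_le_of_lt (le_trans (hR0 n0) (hRU n0)) hn0
    obtain ⟨l, hl, hlX⟩ := hll t ht0
    have hRG : Tendsto R G (nhdsWithin t (Iio t)) :=
      tendsto_nhdsWithin_iff.2 ⟨hRt.mono_left inf_le_left,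
        hmem.mono fun n hn => lt_of_le_of_lt (hRU n) hn⟩
    have hUG : Tendsto U G (nhdsWithin t (Iio t)) :=
      tendsto_nhdsWithin_iff.2 ⟨hUt.mono_left inf_le_left, hmem⟩
    have h1 : Tendsto (fun n => X (R n)) G (nhds l) := hl.comp hRG
    have h2 : Tendsto (fun n => X (U n)) G (nhds l) := hl.comp hUG
    have := limit_compare h1 h2 hXcomp
    linarith


set_option linter.unusedVariables false in
-- chain argument: uniform bound on downward increments over lag ≤ 1
lemma chain_bound (X : ℝ → ℝ) (sbar δ : ℝ) (hδ : 0 < δ)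
    (hkey : ∀ r u : ℝ, 0 ≤ r → r ≤ sbar + 1 → r ≤ u → u ≤ r + δ → X r - X u < 1) :
    ∀ k : ℕ, ∀ r u : ℝ, 0 ≤ r → r ≤ sbar → r ≤ u → u - r ≤ 1 → u - r ≤ k * δ →
      X r - X u ≤ k := by
  intro k
  induction k with
  | zero =>
    intro r u h0 hT hru h1 hk
    have : u = r := le_antisymm (by simpa using hk) hru
    simp [this]
  | succ k ih =>
    intro r u h0 hT hru h1 hk
    rcases le_or_gt (u - r) (k * δ) with h | h
    · have := ih r u h0 hT hru h1 h
      push_cast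
      linarith
    · set v := r + k * δ with hv
      have hkδ : (0:ℝ) ≤ k * δ := by positivity
      have hvu : v ≤ u := by simp only [hv]; linarith
      have hIH : X r - X v ≤ k := ih r v h0 hT (by linarith) (by simp [hv]; linarith) (by simp [hv])
      have hstep : X v - X u < 1 := by
        apply hkey v u (by linarith) _ hvu _
        · linarith
        · push_cast at hk; simp only [hv]; linarith
      push_cast
      linarith


theorem downward_modulus_continuous
    (X : ℝ → ℝ) (hX0 : X 0 = 0)
    (hrc : ∀ u : ℝ, ContinuousWithinAt X (Set.Ici u) u)
    (hll : ∀ u : ℝ, 0 < u → ∃ l : ℝ,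
      Filter.Tendsto X (nhdsWithin u (Set.Iio u)) (nhds l) ∧ l ≤ X u)
    (sbar : ℝ) (hsbar : 0 < sbar) :
    ContinuousOn (downwardModulus X sbar) (Set.Icc 0 1) ∧
      downwardModulus X sbar 0 = 0 := by
  set f : ℝ × ℝ → ℝ := fun p => max (-(X p.2 - X p.1)) 0 with hf
  set S : ℝ → Set (ℝ × ℝ) := fun h => {p : ℝ × ℝ | 0 ≤ p.1 ∧ p.1 ≤ sbar ∧ p.1 ≤ p.2 ∧ p.2 - p.1 ≤ h} with hS
  have hΦ : ∀ h, downwardModulus X sbar h = sSup (f '' S h) := fun h => rfl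
  -- membership of (0,0)
  have hmem0 : ∀ h : ℝ, 0 ≤ h → ((0:ℝ),(0:ℝ)) ∈ S h := by
    intro h hh
    refine ⟨le_refl 0, le_of_lt hsbar, le_refl 0, by simpa using hh⟩
  have hne : ∀ h : ℝ, 0 ≤ h → (f '' S h).Nonempty := fun h hh => ⟨_, ⟨_, hmem0 h hh, rfl⟩⟩
  -- Φ(0) = 0
  have hzero : downwardModulus X sbar 0 = 0 := by
    rw [hΦ]
    have : f '' S 0 = {0} := by
      apply le_antisymm
      · rintro x ⟨p, hp, rfl⟩
        obtain ⟨h1, h2, h3, h4⟩ := hp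
        have : p.2 = p.1 := le_antisymm (by linarith) h3
        simp [hf, this]
      · rintro x hx
        rw [Set.mem_singleton_iff] at hx
        subst hx
        exact ⟨_, hmem0 0 le_rfl, by simp [hf]⟩
    rw [this, csSup_singleton]
  -- uniform bound
  obtain ⟨δ₁, hδ₁, hkey₁⟩ := key_lemma X hrc hll (sbar + 1) 1 one_pos
  set N : ℕ := ⌈1/δ₁⌉₊ with hN
  have hNδ : (1:ℝ) ≤ N * δ₁ := by
    have h1 : 1/δ₁ ≤ (N:ℝ) := Nat.le_ceil _
    calc (1:ℝ) = (1/δ₁) * δ₁ := by field_simp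
    _ ≤ N * δ₁ := by apply mul_le_mul_of_nonneg_right h1 (le_of_lt hδ₁)
  have hchain := chain_bound X sbar δ₁ hδ₁ (fun r u a b c d => hkey₁ r u a b c d)
  have hbdd : ∀ h : ℝ, h ≤ 1 → (N:ℝ) ∈ upperBounds (f '' S h) := by
    rintro h hh x ⟨p, ⟨h1, h2, h3, h4⟩, rfl⟩
    have hb : X p.1 - X p.2 ≤ N :=
      hchain N p.1 p.2 h1 h2 h3 (le_trans h4 hh) (le_trans (le_trans h4 hh) hNδ)
    simp only [hf]
    apply max_le _ (Nat.cast_nonneg N)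
    linarith
  have hBdd : ∀ h : ℝ, h ≤ 1 → BddAbove (f '' S h) := fun h hh => ⟨_, hbdd h hh⟩
  -- monotonicity
  have hmono : ∀ h₁ h₂ : ℝ, 0 ≤ h₁ → h₁ ≤ h₂ → h₂ ≤ 1 →
      downwardModulus X sbar h₁ ≤ downwardModulus X sbar h₂ := by
    intro h₁ h₂ hh1 hh12 hh2
    rw [hΦ, hΦ]
    apply csSup_le_csSup (hBdd h₂ hh2) (hne h₁ hh1)
    apply Set.image_mono
    rintro p ⟨a, b, c, d⟩
    exact ⟨a, b, c, le_trans d hh12⟩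
  -- main estimate
  have hmax : ∀ a b : ℝ, max (a + b) 0 ≤ max a 0 + max b 0 := fun a b =>
    max_le (add_le_add (le_max_left _ _) (le_max_left _ _)) (by positivity)
  have hest : ∀ ε : ℝ, 0 < ε → ∃ δ > (0:ℝ), ∀ h₁ h₂ : ℝ, 0 ≤ h₁ → h₁ ≤ 1 → 0 ≤ h₂ → h₂ ≤ 1 →
      h₂ ≤ h₁ + δ → downwardModulus X sbar h₂ ≤ downwardModulus X sbar h₁ + ε := by
    intro ε hε
    obtain ⟨δ, hδ, hkey⟩ := key_lemma X hrc hll (sbar + 1) ε hε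
    refine ⟨δ, hδ, fun h₁ h₂ hh1 hh1' hh2' hh2 hh12 => ?_⟩
    rw [hΦ, hΦ]
    apply csSup_le (hne h₂ hh2')
    rintro x ⟨p, ⟨h1, h2, h3, h4⟩, rfl⟩
    rcases le_or_gt (p.2 - p.1) h₁ with hc | hc
    · have : f p ≤ sSup (f '' S h₁) :=
        le_csSup (hBdd h₁ hh1') ⟨p, ⟨h1, h2, h3, hc⟩, rfl⟩
      linarith
    · set v := p.1 + h₁ with hv
      have hfv : f (p.1, v) ≤ sSup (f '' S h₁) :=
        le_csSup (hBdd h₁ hh1') ⟨(p.1, v), ⟨h1, h2, by simp [hv]; linarith, by simp [hv]⟩, rfl⟩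
      have hstep : X v - X p.2 < ε := by
        apply hkey v p.2 (by simp [hv]; linarith) (by simp [hv]; linarith) (by simp [hv]; linarith)
        simp only [hv]; linarith
      have hsplit : f p ≤ f (p.1, v) + max (X v - X p.2) 0 := by
        simp only [hf]
        have h5 : -(X p.2 - X p.1) = (-(X v - X p.1)) + (X v - X p.2) := by ring
        rw [h5]
        exact hmax _ _
      have h6 : max (X v - X p.2) 0 ≤ ε := max_le (le_of_lt hstep) (le_of_lt hε)
      calc f p ≤ f (p.1, v) + max (X v - X p.2) 0 := hsplit
      _ ≤ sSup (f '' S h₁) + ε := add_le_add hfv h6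
  constructor
  · -- continuity
    rw [Metric.continuousOn_iff]
    intro a ha ε hε
    obtain ⟨δ, hδ, hest'⟩ := hest (ε/2) (by linarith)
    refine ⟨δ, hδ, fun b hb hab => ?_⟩
    have key2 : ∀ x y : ℝ, x ∈ Icc (0:ℝ) 1 → y ∈ Icc (0:ℝ) 1 → x ≤ y →
        y ≤ x + δ → |downwardModulus X sbar y - downwardModulus X sbar x| ≤ ε/2 := by
      intro x y hx hy hxy hyd
      rw [abs_sub_le_iff]
      constructor
      · linarith [hest' x y hx.1 hx.2 hy.1 hy.2 hyd]
      · linarith [hmono x y hx.1 hxy hy.2]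
    rw [Real.dist_eq] at hab ⊢
    rcases le_or_gt b a with h | h
    · have := key2 b a hb ha h (by rw [abs_sub_comm] at hab; rw [abs_lt] at hab; linarith)
      rw [abs_sub_comm] at this; linarith
    · have := key2 a b ha hb (le_of_lt h) (by rw [abs_lt] at hab; linarith)
      linarith
  · exact hzero
end

section
/- Let X : [0,∞) → ℝ be càdlàg with X_0 = 0, and define for s ≥ 0: βH_s = X_s - inf_{0≤r≤s} X_r - Σ_{0≤r≤s} Δ\bar{X}^s_r, where \bar{X}^s_r = inf_{r≤u≤s} X_u and Δ\bar{X}^s_r denotes the jump of r ↦ \bar{X}^s_r at r. Then for all 0 ≤ s ≤ s+h, β(H_{s+h} - H_s) ≥ inf_{s ≤ r ≤ s+h} X_r - X_s; in particular (H_{s+h} - H_s)⁻ ≤ β^{-1} sup_{0≤r≤s, 0≤u-r≤h, u≤s+h} (X_u - X_r)⁻. -/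
/-- The future infimum `\bar X^s_r = inf_{r ≤ u ≤ s} X_u`. -/
noncomputable def futureInf (X : ℝ → ℝ) (s r : ℝ) : ℝ :=
  sInf (X '' Set.Icc r s)

/-- The jump `Δ \bar X^s_r` of the nondecreasing map `r ↦ \bar X^s_r` at `r`. -/
noncomputable def futureInfJump (X : ℝ → ℝ) (s r : ℝ) : ℝ :=
  if 0 < r then futureInf X s r - sSup ((fun u => futureInf X s u) '' Set.Ico 0 r)
  else 0

/-!
Write `T = s + h` and `m = inf_{[s, T]} X`. On `[0, s]` the future infimum with horizon `T` is
`min (\bar X^s, m)`, and since `min · m` is monotone and 1-Lipschitz its jumps there are at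
most those of `\bar X^s`; its jumps on `(s, T]` add up to at most its increment `X_T - m`; and
the running infimum `inf_{[0, ·]} X` is nonincreasing. Subtracting (1.4) at `s` from (1.4) at
`T` therefore gives `β (H_T - H_s) ≥ m - X_s`, and `X_s - m` is bounded by the supremum of the
drops `(X_u - X_s)⁻`, `u ∈ [s, T]`. A càdlàg path is bounded on compacts, so all the infima,
suprema and sums involved are genuine.
-/

open Set Filter Topology

theorem Filter.Tendsto.exists_mem_isBounded_image {α E : Type*} [PseudoMetricSpace E]
    {F : Filter α} {f : α → E} {l : E} (h : Tendsto f F (𝓝 l)) :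
    ∃ t ∈ F, Bornology.IsBounded (f '' t) :=
  ⟨f ⁻¹' Metric.ball l 1, h (Metric.ball_mem_nhds l one_pos),
    Metric.isBounded_ball.subset (image_preimage_subset _ _)⟩

theorem isBounded_image_Icc_of_rightCts_leftLim {α E : Type*} [LinearOrder α]
    [TopologicalSpace α] [OrderTopology α] [CompactIccSpace α] [PseudoMetricSpace E]
    {X : α → E} {a b : α} (hrc : ∀ u ∈ Icc a b, ContinuousWithinAt X (Ici u) u)
    (hll : ∀ u ∈ Ioc a b, ∃ l, Tendsto X (𝓝[<] u) (𝓝 l)) :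
    Bornology.IsBounded (X '' Icc a b) := by
  refine isCompact_Icc.induction_on (p := fun t => Bornology.IsBounded (X '' t)) (by simp)
    (fun s t hst ht => ht.subset (image_mono hst))
    (fun s t hs ht => by rw [image_union]; exact hs.union ht) ?_
  intro u hu
  obtain ⟨tr, htr, htr_bdd⟩ := (hrc u hu).tendsto.exists_mem_isBounded_image
  rcases hu.1.eq_or_lt with rfl | hau
  · exact ⟨tr, nhdsWithin_mono _ Icc_subset_Ici_self htr, htr_bdd⟩
  · obtain ⟨l, hl⟩ := hll u ⟨hau, hu.2⟩
    obtain ⟨tl, htl, htl_bdd⟩ := hl.exists_mem_isBounded_image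
    refine ⟨tl ∪ tr, mem_nhdsWithin_of_mem_nhds ?_, ?_⟩
    · rw [← nhdsLT_sup_nhdsGE]
      exact ⟨mem_of_superset htl subset_union_left, mem_of_superset htr subset_union_right⟩
    · rw [image_union]
      exact htl_bdd.union htr_bdd

section FutureInf

variable {X : ℝ → ℝ} {T b c r s u : ℝ}

theorem futureInf_self (X : ℝ → ℝ) (T : ℝ) : futureInf X T T = X T := by
  simp [futureInf]

theorem futureInf_le (hX : BddBelow (X '' Icc r T)) (hu : u ∈ Icc r T) :
    futureInf X T r ≤ X u :=
  csInf_le hX (mem_image_of_mem X hu)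

theorem futureInf_mono (hX : BddBelow (X '' Icc r T)) (hrs : r ≤ s) (hsT : s ≤ T) :
    futureInf X T r ≤ futureInf X T s :=
  csInf_le_csInf hX ((nonempty_Icc.2 hsT).image X) (image_mono (Icc_subset_Icc_left hrs))

theorem futureInf_eq_min (hX : BddBelow (X '' Icc r T)) (hrs : r ≤ s) (hsT : s ≤ T) :
    futureInf X T r = min (futureInf X s r) (futureInf X T s) := by
  rw [futureInf, ← Icc_union_Icc_eq_Icc hrs hsT, image_union,
    csInf_union (hX.mono (image_mono (Icc_subset_Icc_right hsT)))
      ((nonempty_Icc.2 hrs).image X) (hX.mono (image_mono (Icc_subset_Icc_left hrs)))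
      ((nonempty_Icc.2 hsT).image X)]
  rfl

theorem bddAbove_futureInf_image_Ico (hX : BddBelow (X '' Icc 0 T)) (hrT : r ≤ T) :
    BddAbove (futureInf X T '' Ico 0 r) :=
  ⟨X T, forall_mem_image.2 fun _ hu =>
    futureInf_le (hX.mono (image_mono (Icc_subset_Icc_left hu.1))) ⟨hu.2.le.trans hrT, le_rfl⟩⟩

theorem futureInfJump_nonneg (hX : BddBelow (X '' Icc 0 T)) (hrT : r ≤ T) :
    0 ≤ futureInfJump X T r := by
  by_cases hr : 0 < r
  · rw [futureInfJump, if_pos hr, sub_nonneg]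
    refine csSup_le ((nonempty_Ico.2 hr).image _) (forall_mem_image.2 fun u hu => ?_)
    exact futureInf_mono (hX.mono (image_mono (Icc_subset_Icc_left hu.1))) hu.2.le hrT
  · rw [futureInfJump, if_neg hr]

theorem futureInfJump_le_sub (hX : BddBelow (X '' Icc 0 T)) (hc : c ∈ Ico 0 r) (hrT : r ≤ T) :
    futureInfJump X T r ≤ futureInf X T r - futureInf X T c := by
  rw [futureInfJump, if_pos (hc.1.trans_lt hc.2)]
  have := le_csSup (bddAbove_futureInf_image_Ico hX hrT) (mem_image_of_mem _ hc)
  linarith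

theorem sum_futureInfJump_le (hX : BddBelow (X '' Icc 0 T)) {F : Finset ℝ}
    (hF : ∀ r ∈ F, r ∈ Ioc c b) (hc : 0 ≤ c) (hcb : c ≤ b) (hbT : b ≤ T) :
    ∑ r ∈ F, futureInfJump X T r ≤ futureInf X T b - futureInf X T c := by
  induction F using Finset.induction_on_min generalizing c with
  | empty =>
    simpa using futureInf_mono (hX.mono (image_mono (Icc_subset_Icc_left hc))) hcb hbT
  | insert a F haF IH =>
    have ha : a ∈ Ioc c b := hF a (Finset.mem_insert_self a F)
    rw [Finset.sum_insert fun h => lt_irrefl a (haF a h)]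
    have hsum := IH (fun r hr => ⟨haF r hr, (hF r (Finset.mem_insert_of_mem hr)).2⟩)
      (hc.trans ha.1.le) ha.2
    have hjump := futureInfJump_le_sub hX ⟨hc, ha.1⟩ (ha.2.trans hbT)
    linarith

theorem sum_subtype_futureInfJump_le (hX : BddBelow (X '' Icc 0 T)) {S : Set ℝ}
    (hS : S ⊆ Ioc c b) (hc : 0 ≤ c) (hcb : c ≤ b) (hbT : b ≤ T) (F : Finset S) :
    ∑ r ∈ F, futureInfJump X T r ≤ futureInf X T b - futureInf X T c := by
  rw [← Finset.sum_image Subtype.val_injective.injOn]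
  refine sum_futureInfJump_le hX (fun r hr => ?_) hc hcb hbT
  obtain ⟨x, -, rfl⟩ := Finset.mem_image.1 hr
  exact hS x.2

theorem summable_futureInfJump_of_subset_Ioc (hX : BddBelow (X '' Icc 0 T)) {S : Set ℝ}
    (hS : S ⊆ Ioc c b) (hc : 0 ≤ c) (hcb : c ≤ b) (hbT : b ≤ T) :
    Summable fun r : S => futureInfJump X T r :=
  summable_of_sum_le (fun r => futureInfJump_nonneg hX ((hS r.2).2.trans hbT))
    (sum_subtype_futureInfJump_le hX hS hc hcb hbT)

theorem tsum_futureInfJump_le (hX : BddBelow (X '' Icc 0 T)) {S : Set ℝ}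
    (hS : S ⊆ Ioc c b) (hc : 0 ≤ c) (hcb : c ≤ b) (hbT : b ≤ T) :
    ∑' r : S, futureInfJump X T r ≤ futureInf X T b - futureInf X T c :=
  Real.tsum_le_of_sum_le (fun r => futureInfJump_nonneg hX ((hS r.2).2.trans hbT))
    (sum_subtype_futureInfJump_le hX hS hc hcb hbT)

theorem summable_futureInfJump_Icc (hX : BddBelow (X '' Icc 0 T)) (hT : 0 ≤ T) :
    Summable fun r : Icc (0 : ℝ) T => futureInfJump X T r := by
  have hind :
      (Icc 0 T).indicator (futureInfJump X T) = (Ioc 0 T).indicator (futureInfJump X T) := by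
    ext r
    by_cases hr : 0 < r
    · simp [indicator, hr, hr.le]
    · simp [indicator, futureInfJump, hr]
  have hIoc := (summable_subtype_iff_indicator (f := futureInfJump X T) (s := Ioc 0 T)).1
    (summable_futureInfJump_of_subset_Ioc hX subset_rfl le_rfl hT le_rfl)
  rw [← hind] at hIoc
  exact summable_subtype_iff_indicator.2 hIoc

theorem sSup_futureInf_image_Ico_eq_min (hX : BddBelow (X '' Icc 0 T)) (hr : 0 < r) (hrs : r ≤ s)
    (hsT : s ≤ T) :
    sSup (futureInf X T '' Ico 0 r)
      = min (sSup (futureInf X s '' Ico 0 r)) (futureInf X T s) := by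
  have hXs : BddBelow (X '' Icc 0 s) := hX.mono (image_mono (Icc_subset_Icc_right hsT))
  have hcomp : futureInf X T '' Ico 0 r
      = (fun x => min x (futureInf X T s)) '' (futureInf X s '' Ico 0 r) := by
    rw [← image_comp]
    refine image_congr fun u hu => ?_
    exact futureInf_eq_min (hX.mono (image_mono (Icc_subset_Icc_left hu.1)))
      (hu.2.le.trans hrs) hsT
  rw [hcomp]
  exact (Monotone.map_csSup_of_continuousAt (continuous_id.min continuous_const).continuousAt
    (fun x y hxy => min_le_min_right _ hxy) ((nonempty_Ico.2 hr).image _)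
    (bddAbove_futureInf_image_Ico hXs hrs)).symm

theorem futureInfJump_le_futureInfJump (hX : BddBelow (X '' Icc 0 T)) (hrs : r ≤ s)
    (hsT : s ≤ T) :
    futureInfJump X T r ≤ futureInfJump X s r := by
  by_cases hr : 0 < r
  · have hXs : BddBelow (X '' Icc 0 s) := hX.mono (image_mono (Icc_subset_Icc_right hsT))
    rw [futureInfJump, futureInfJump, if_pos hr, if_pos hr,
      futureInf_eq_min (hX.mono (image_mono (Icc_subset_Icc_left hr.le))) hrs hsT,
      sSup_futureInf_image_Ico_eq_min hX hr hrs hsT]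
    have hjump := futureInfJump_nonneg hXs hrs
    rw [futureInfJump, if_pos hr] at hjump
    -- `min · c` is monotone and 1-Lipschitz
    have := abs_min_sub_min_le_max (futureInf X s r) (futureInf X T s)
      (sSup (futureInf X s '' Ico 0 r)) (futureInf X T s)
    rw [sub_self, abs_zero, abs_of_nonneg hjump, max_eq_left hjump] at this
    exact (le_abs_self _).trans this
  · rw [futureInfJump, futureInfJump, if_neg hr, if_neg hr]

theorem tsum_futureInfJump_le_add (hX : BddBelow (X '' Icc 0 T)) (hs : 0 ≤ s) (hsT : s ≤ T) :
    ∑' r : Icc (0 : ℝ) T, futureInfJump X T r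
      ≤ ∑' r : Icc (0 : ℝ) s, futureInfJump X s r + (X T - futureInf X T s) := by
  have hXs : BddBelow (X '' Icc 0 s) := hX.mono (image_mono (Icc_subset_Icc_right hsT))
  have hsum_s := summable_futureInfJump_Icc hXs hs
  have hle : ∀ r : Icc (0 : ℝ) s, futureInfJump X T r ≤ futureInfJump X s r :=
    fun r => futureInfJump_le_futureInfJump hX r.2.2 hsT
  have hsum_T : Summable fun r : Icc (0 : ℝ) s => futureInfJump X T r :=
    Summable.of_nonneg_of_le (fun r => futureInfJump_nonneg hX (r.2.2.trans hsT)) hle hsum_s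
  have hsplit := Summable.tsum_union_disjoint (f := futureInfJump X T)
    (disjoint_left.2 fun r h₁ h₂ => h₂.1.not_ge h₁.2) hsum_T
    (summable_futureInfJump_of_subset_Ioc hX subset_rfl hs hsT le_rfl)
  rw [Icc_union_Ioc_eq_Icc hs hsT] at hsplit
  rw [hsplit]
  refine add_le_add (hsum_T.tsum_le_tsum hle hsum_s) ?_
  simpa only [futureInf_self] using tsum_futureInfJump_le hX subset_rfl hs hsT le_rfl

end FutureInf

/-- `β H_s` in the notation of (1.4). -/
noncomputable def scaledHeight (X : ℝ → ℝ) (s : ℝ) : ℝ :=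
  X s - sInf (X '' Icc 0 s) - ∑' r : Icc (0 : ℝ) s, futureInfJump X s r

theorem futureInf_sub_le_scaledHeight_sub {X : ℝ → ℝ} {s T : ℝ}
    (hX : BddBelow (X '' Icc 0 T)) (hs : 0 ≤ s) (hsT : s ≤ T) :
    futureInf X T s - X s ≤ scaledHeight X T - scaledHeight X s := by
  have hinf : sInf (X '' Icc 0 T) ≤ sInf (X '' Icc 0 s) :=
    (futureInf_eq_min hX hs hsT).trans_le (min_le_left _ _)
  have hjumps := tsum_futureInfJump_le_add hX hs hsT
  rw [scaledHeight, scaledHeight]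
  linarith

theorem bddAbove_image_negPart_sub {X : ℝ → ℝ} {K : Set ℝ} {P : Set (ℝ × ℝ)}
    (hX : Bornology.IsBounded (X '' K)) (hP : ∀ p ∈ P, p.1 ∈ K ∧ p.2 ∈ K) :
    BddAbove ((fun p : ℝ × ℝ => max (-(X p.2 - X p.1)) 0) '' P) := by
  obtain ⟨A, hA⟩ := hX.bddAbove
  obtain ⟨B, hB⟩ := hX.bddBelow
  refine ⟨max (A - B) 0, forall_mem_image.2 fun p hp => max_le_max_right 0 ?_⟩
  have := hA (mem_image_of_mem X (hP p hp).1)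
  have := hB (mem_image_of_mem X (hP p hp).2)
  linarith

theorem sub_sInf_le_sSup_image_negPart_sub {X : ℝ → ℝ} {s : ℝ} {U : Set ℝ} {P : Set (ℝ × ℝ)}
    (hbdd : BddAbove ((fun p : ℝ × ℝ => max (-(X p.2 - X p.1)) 0) '' P)) (hU : U.Nonempty)
    (hUP : ∀ u ∈ U, (s, u) ∈ P) :
    X s - sInf (X '' U) ≤ sSup ((fun p : ℝ × ℝ => max (-(X p.2 - X p.1)) 0) '' P) := by
  rw [sub_le_comm]
  refine le_csInf (hU.image X) (forall_mem_image.2 fun u hu => ?_)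
  have := le_csSup hbdd (mem_image_of_mem _ (hUP u hu))
  have := le_max_left (-(X u - X s)) 0
  linarith

theorem height_process_lower_increment_bound_general
    (β : ℝ) (hβ : 0 < β) (X : ℝ → ℝ)
    (hrc : ∀ u : ℝ, ContinuousWithinAt X (Set.Ici u) u)
    (hll : ∀ u : ℝ, 0 < u → ∃ l : ℝ,
      Filter.Tendsto X (nhdsWithin u (Set.Iio u)) (nhds l))
    (H : ℝ → ℝ)
    (hH : ∀ s : ℝ, 0 ≤ s →
      β * H s = X s - sInf (X '' Set.Icc 0 s)
        - ∑' r : Set.Icc (0 : ℝ) s, futureInfJump X s r) :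
    ∀ s h : ℝ, 0 ≤ s → 0 ≤ h →
      (sInf (X '' Set.Icc s (s + h)) - X s ≤ β * (H (s + h) - H s)) ∧
      max (-(H (s + h) - H s)) 0
        ≤ β⁻¹ * sSup ((fun p : ℝ × ℝ => max (-(X p.2 - X p.1)) 0)
            '' {p : ℝ × ℝ | 0 ≤ p.1 ∧ p.1 ≤ s ∧ p.1 ≤ p.2 ∧ p.2 - p.1 ≤ h ∧
                  p.2 ≤ s + h}) := by
  intro s h hs hh
  have hst : s ≤ s + h := le_add_of_nonneg_right hh
  have hX : Bornology.IsBounded (X '' Icc 0 (s + h)) :=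
    isBounded_image_Icc_of_rightCts_leftLim (fun u _ => hrc u) fun u hu => hll u hu.1
  have hincr : β * (H (s + h) - H s) = scaledHeight X (s + h) - scaledHeight X s := by
    rw [mul_sub, hH s hs, hH _ (hs.trans hst), scaledHeight, scaledHeight]
  have hlower : sInf (X '' Icc s (s + h)) - X s ≤ β * (H (s + h) - H s) :=
    hincr ▸ futureInf_sub_le_scaledHeight_sub hX.bddBelow hs hst
  have hbdd := bddAbove_image_negPart_sub
    (P := {p : ℝ × ℝ | 0 ≤ p.1 ∧ p.1 ≤ s ∧ p.1 ≤ p.2 ∧ p.2 - p.1 ≤ h ∧ p.2 ≤ s + h}) hX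
    fun p hp => ⟨⟨hp.1, hp.2.1.trans hst⟩, ⟨hp.1.trans hp.2.2.1, hp.2.2.2.2⟩⟩
  refine ⟨hlower, max_le ?_ ?_⟩
  · rw [le_inv_mul_iff₀ hβ]
    have := sub_sInf_le_sSup_image_negPart_sub hbdd (nonempty_Icc.2 hst)
      fun u hu => ⟨hs, le_rfl, hu.1, by linarith [hu.2], hu.2⟩
    linarith
  · exact mul_nonneg (inv_nonneg.2 hβ.le)
      (le_csSup hbdd ⟨(s, s), ⟨hs, le_rfl, le_rfl, by simpa using hh, hst⟩, by simp⟩)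

theorem height_process_lower_increment_bound
    (β : ℝ) (hβ : 0 < β) (X : ℝ → ℝ) (hX0 : X 0 = 0)
    (hrc : ∀ u : ℝ, ContinuousWithinAt X (Set.Ici u) u)
    (hll : ∀ u : ℝ, 0 < u → ∃ l : ℝ,
      Filter.Tendsto X (nhdsWithin u (Set.Iio u)) (nhds l))
    (H : ℝ → ℝ)
    (hH : ∀ s : ℝ, 0 ≤ s →
      β * H s = X s - sInf (X '' Set.Icc 0 s)
        - ∑' r : Set.Icc (0 : ℝ) s, futureInfJump X s r) :
    ∀ s h : ℝ, 0 ≤ s → 0 ≤ h →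
      (sInf (X '' Set.Icc s (s + h)) - X s ≤ β * (H (s + h) - H s)) ∧
      max (-(H (s + h) - H s)) 0
        ≤ β⁻¹ * sSup ((fun p : ℝ × ℝ => max (-(X p.2 - X p.1)) 0)
            '' {p : ℝ × ℝ | 0 ≤ p.1 ∧ p.1 ≤ s ∧ p.1 ≤ p.2 ∧ p.2 - p.1 ≤ h ∧
                  p.2 ≤ s + h}) :=
  height_process_lower_increment_bound_general β hβ X hrc hll H hH
end

section
/- Let (ξ_k, η_k) and (ξ, η) be random pairs on a probability space (Ω, F, P), where η_k, η are nonnegative with E[η_k] = E[η] = 1. Define probability measures P̃_k and P̃ by dP̃_k/dP = η_k and dP̃/dP = η. If (ξ_k, η_k) converges in distribution to (ξ, η), then the law of ξ_k under P̃_k converges weakly to the law of ξ under P̃. -/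
/-!
Under the reweighted measure the integral of `g ∘ ξ_k` is `E[η_k g(ξ_k)]`, whose integrand is
unbounded in `η_k`, so convergence in law does not apply to it directly. Truncating the density
at level `n` gives the bounded continuous test function `(x, y) ↦ min (y⁺, n) g(x)`, and the
truncation error is at most `‖g‖ (1 - E[min (η_k, n)])`. Because `E[η_k] = 1`, this error
converges as `k → ∞` to `‖g‖ (1 - E[min (η, n)])`, which tends to `0` as `n → ∞` by dominated
convergence: the densities are uniformly integrable.
-/

open MeasureTheory BoundedContinuousFunction
open Filter Topology NNReal

theorem tendsto_of_tendsto_approx {α ι κ : Type*} [PseudoMetricSpace α]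
    {l : Filter ι} {L : Filter κ} [L.NeBot] {x : ι → α} {x₀ : α}
    {u : κ → ι → α} {u₀ : κ → α} {e : κ → ι → ℝ} {e₀ : κ → ℝ}
    (hu : ∀ n, Tendsto (u n) l (𝓝 (u₀ n))) (he : ∀ n, Tendsto (e n) l (𝓝 (e₀ n)))
    (he₀ : Tendsto e₀ L (𝓝 0))
    (hx : ∀ n i, dist (x i) (u n i) ≤ e n i) (hx₀ : ∀ n, dist x₀ (u₀ n) ≤ e₀ n) :
    Tendsto x l (𝓝 x₀) := by
  refine Metric.tendsto_nhds.2 fun ε hε => ?_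
  obtain ⟨n, hn⟩ := (he₀.eventually (gt_mem_nhds (by positivity : 0 < ε / 4))).exists
  filter_upwards [(hu n).eventually (Metric.ball_mem_nhds _ (by positivity : 0 < ε / 4)),
    (he n).eventually (gt_mem_nhds (by linarith : e₀ n < ε / 4))] with i hui hei
  calc dist (x i) x₀ ≤ dist (x i) (u n i) + dist (u n i) (u₀ n) + dist (u₀ n) x₀ :=
        dist_triangle4 _ _ _ _
    _ < ε := by linarith [hx n i, hx₀ n, Metric.mem_ball.1 hui, dist_comm x₀ (u₀ n)]

theorem integral_withDensity_ofReal_eq_integral_smul {Ω E : Type*} [MeasurableSpace Ω]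
    {μ : Measure Ω} [NormedAddCommGroup E] [NormedSpace ℝ E] {h : Ω → ℝ} (hh : Measurable h)
    (h0 : ∀ᵐ ω ∂μ, 0 ≤ h ω) (f : Ω → E) :
    ∫ ω, f ω ∂μ.withDensity (fun ω => ENNReal.ofReal (h ω)) = ∫ ω, h ω • f ω ∂μ := by
  rw [integral_withDensity_eq_integral_toReal_smul hh.ennreal_ofReal
    (ae_of_all _ fun _ => ENNReal.ofReal_lt_top)]
  refine integral_congr_ae ?_
  filter_upwards [h0] with ω hω
  rw [ENNReal.toReal_ofReal hω]

theorem abs_min_le_abs_of_nonneg {a b : ℝ} (hb : 0 ≤ b) : |min a b| ≤ |a| :=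
  abs_le.2 ⟨by simp [neg_abs_le, (neg_nonpos.2 (abs_nonneg a)).trans hb],
    (min_le_left a b).trans (le_abs_self a)⟩

section Truncation

variable {Ω : Type*} [MeasurableSpace Ω] {μ : Measure Ω} {h : Ω → ℝ}

theorem MeasureTheory.Integrable.min_const (hh : Integrable h μ) {M : ℝ} (hM : 0 ≤ M) :
    Integrable (fun ω => min (h ω) M) μ :=
  hh.mono (hh.aestronglyMeasurable.inf aestronglyMeasurable_const)
    (ae_of_all _ fun _ => abs_min_le_abs_of_nonneg hM)

theorem tendsto_integral_min_natCast (hh : Integrable h μ) :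
    Tendsto (fun n : ℕ => ∫ ω, min (h ω) n ∂μ) atTop (𝓝 (∫ ω, h ω ∂μ)) :=
  tendsto_integral_of_dominated_convergence (fun ω => |h ω|)
    (fun n => (hh.min_const n.cast_nonneg).aestronglyMeasurable) hh.abs
    (fun n => ae_of_all _ fun _ => abs_min_le_abs_of_nonneg n.cast_nonneg)
    (ae_of_all _ fun ω => tendsto_atTop_of_eventually_const fun _ hn =>
      min_eq_left ((Nat.le_ceil (h ω)).trans (Nat.cast_le.2 hn)))

theorem abs_integral_mul_sub_integral_min_mul_le {φ : Ω → ℝ} {C M : ℝ}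
    (hφ : AEStronglyMeasurable φ μ) (hφC : ∀ ω, |φ ω| ≤ C) (hh : Integrable h μ) (hM : 0 ≤ M) :
    |∫ ω, h ω * φ ω ∂μ - ∫ ω, min (h ω) M * φ ω ∂μ|
      ≤ C * (∫ ω, h ω ∂μ - ∫ ω, min (h ω) M ∂μ) := by
  have hmin := hh.min_const hM
  have hφb : ∀ᵐ ω ∂μ, ‖φ ω‖ ≤ C := ae_of_all _ hφC
  have hhφ : Integrable (fun ω => h ω * φ ω) μ := hh.mul_bdd hφ hφb
  have hminφ : Integrable (fun ω => min (h ω) M * φ ω) μ := hmin.mul_bdd hφ hφb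
  rw [← integral_sub hhφ hminφ, ← integral_sub hh hmin, ← integral_const_mul,
    ← Real.norm_eq_abs]
  refine norm_integral_le_of_norm_le ((hh.sub hmin).const_mul C) (ae_of_all _ fun ω => ?_)
  have htail : 0 ≤ h ω - min (h ω) M := sub_nonneg.2 (min_le_left _ _)
  rw [← sub_mul, norm_mul, Real.norm_of_nonneg htail, mul_comm]
  exact mul_le_mul_of_nonneg_right (hφC ω) htail

end Truncation

noncomputable def BoundedContinuousFunction.clamp (M : ℝ≥0) : ℝ →ᵇ ℝ :=
  ofNormedAddCommGroup (fun y : ℝ => min (max y 0) (M : ℝ)) (by fun_prop) M fun y => by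
    rw [Real.norm_eq_abs, abs_of_nonneg (le_min (le_max_right y 0) M.coe_nonneg)]
    exact min_le_right _ _

theorem BoundedContinuousFunction.clamp_apply_of_nonneg (M : ℝ≥0) {y : ℝ} (hy : 0 ≤ y) :
    clamp M y = min y M := by
  simp [clamp, hy]

theorem girsanov_reweighting_stable_under_weak_convergence_general
    {Ω : Type*} [MeasurableSpace Ω] (P : Measure Ω) [IsProbabilityMeasure P]
    {E : Type*} [MeasurableSpace E] [TopologicalSpace E]
    [BorelSpace E]
    (ξk : ℕ → Ω → E) (ξ : Ω → E) (ηk : ℕ → Ω → ℝ) (η : Ω → ℝ)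
    (hξk : ∀ k, Measurable (ξk k)) (hξ : Measurable ξ)
    (hηk : ∀ k, Measurable (ηk k)) (hη : Measurable η)
    (hηknonneg : ∀ k, ∀ ω, 0 ≤ ηk k ω) (hηnonneg : ∀ ω, 0 ≤ η ω)
    (hηkmean : ∀ k, ∫ ω, ηk k ω ∂P = 1) (hηmean : ∫ ω, η ω ∂P = 1)
    (hconv : ∀ f : E × ℝ →ᵇ ℝ,
      Filter.Tendsto (fun k => ∫ ω, f (ξk k ω, ηk k ω) ∂P) Filter.atTop
        (nhds (∫ ω, f (ξ ω, η ω) ∂P))) :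
    ∀ g : E →ᵇ ℝ,
      Filter.Tendsto
        (fun k => ∫ ω, g (ξk k ω)
            ∂(P.withDensity (fun ω => ENNReal.ofReal (ηk k ω))))
        Filter.atTop
        (nhds (∫ ω, g (ξ ω)
            ∂(P.withDensity (fun ω => ENNReal.ofReal (η ω))))) := by
  intro g
  simp only [integral_withDensity_ofReal_eq_integral_smul (hηk _) (ae_of_all _ (hηknonneg _)),
    integral_withDensity_ofReal_eq_integral_smul hη (ae_of_all _ hηnonneg), smul_eq_mul]
  have hconv_clamp (n : ℕ) (φ : E →ᵇ ℝ) :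
      Tendsto (fun k => ∫ ω, min (ηk k ω) n * φ (ξk k ω) ∂P) atTop
        (𝓝 (∫ ω, min (η ω) n * φ (ξ ω) ∂P)) := by
    convert hconv ((clamp n).compContinuous ContinuousMap.snd * φ.compContinuous ContinuousMap.fst)
      using 4 <;>
    simp [clamp_apply_of_nonneg, hηknonneg, hηnonneg]
  have hint {h : Ω → ℝ} (hmean : ∫ ω, h ω ∂P = 1) : Integrable h P :=
    .of_integral_ne_zero (by simp [hmean])
  have htrunc {ζ : Ω → E} {h : Ω → ℝ} (hζ : Measurable ζ) (hmean : ∫ ω, h ω ∂P = 1) (n : ℕ) :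
      dist (∫ ω, h ω * g (ζ ω) ∂P) (∫ ω, min (h ω) n * g (ζ ω) ∂P)
        ≤ ‖g‖ * (1 - ∫ ω, min (h ω) n ∂P) := by
    rw [Real.dist_eq, ← hmean]
    exact abs_integral_mul_sub_integral_min_mul_le
      (g.continuous.measurable.comp hζ).aestronglyMeasurable
      (fun ω => Real.norm_eq_abs (g (ζ ω)) ▸ g.norm_coe_le_norm _)
      (hint hmean) n.cast_nonneg
  refine tendsto_of_tendsto_approx (L := atTop) (hconv_clamp · g)
    (fun n => ?_) ?_ (fun n k => htrunc (hξk k) (hηkmean k) n) (htrunc hξ hηmean)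
  · simpa using ((hconv_clamp n 1).const_sub 1).const_mul ‖g‖
  · simpa [hηmean] using ((tendsto_integral_min_natCast (hint hηmean)).const_sub 1).const_mul ‖g‖

theorem girsanov_reweighting_stable_under_weak_convergence
    {Ω : Type*} [MeasurableSpace Ω] (P : Measure Ω) [IsProbabilityMeasure P]
    {E : Type*} [MeasurableSpace E] [TopologicalSpace E] [PolishSpace E]
    [BorelSpace E]
    (ξk : ℕ → Ω → E) (ξ : Ω → E) (ηk : ℕ → Ω → ℝ) (η : Ω → ℝ)
    (hξk : ∀ k, Measurable (ξk k)) (hξ : Measurable ξ)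
    (hηk : ∀ k, Measurable (ηk k)) (hη : Measurable η)
    (hηknonneg : ∀ k, ∀ ω, 0 ≤ ηk k ω) (hηnonneg : ∀ ω, 0 ≤ η ω)
    (hηkmean : ∀ k, ∫ ω, ηk k ω ∂P = 1) (hηmean : ∫ ω, η ω ∂P = 1)
    (hconv : ∀ f : E × ℝ →ᵇ ℝ,
      Filter.Tendsto (fun k => ∫ ω, f (ξk k ω, ηk k ω) ∂P) Filter.atTop
        (nhds (∫ ω, f (ξ ω, η ω) ∂P))) :
    ∀ g : E →ᵇ ℝ,
      Filter.Tendsto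
        (fun k => ∫ ω, g (ξk k ω)
            ∂(P.withDensity (fun ω => ENNReal.ofReal (ηk k ω))))
        Filter.atTop
        (nhds (∫ ω, g (ξ ω)
            ∂(P.withDensity (fun ω => ENNReal.ofReal (η ω))))) :=
  girsanov_reweighting_stable_under_weak_convergence_general P ξk ξ ηk η hξk hξ hηk hη hηknonneg
    hηnonneg hηkmean hηmean hconv
end
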